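/- arXiv:1809.03002 — 2 statements merged into one kernel-verified Lean document; each statement's English description precedes it below -/
import Mathlib

section
/- Every edge of a Kan complex is invertible: if K is a Kan complex and x : Δ[1] → K is any edge of K, then there exists a map y : bΔ[1] → K with y ∘ δ = x. -/
open CategoryTheory Simplicial CategoryTheory.Limits Opposite

namespace IndexedPaper
/-- The chaotic preorder on two objects. -/
inductive TwoObj : Type where
  | zero
  | one

instance : Preorder TwoObj where
  le _ _ := True
  le_refl _ := trivial
  le_trans _ _ _ _ _ := trivial

/-- `bΔ[1]`, the nerve of the groupoid with two objects and exactly one morphism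
between every ordered pair of objects. -/
def bDelta1 : SSet := CategoryTheory.nerve TwoObj

/-- `δ : Δ[1] ⟶ bΔ[1]`, classifying the morphism from the first object to the second. -/
noncomputable def deltaB : Δ[1] ⟶ bDelta1 :=
  (SSet.yonedaEquiv (X := bDelta1) (n := ⦋1⦌)).symm
    (CategoryTheory.ComposableArrows.mk₁ (homOfLE trivial : TwoObj.zero ⟶ TwoObj.one))

/-- An edge `x : Δ[1] ⟶ X` is invertible if it extends along `δ` to `bΔ[1]`. -/
def IsInvertibleEdge {X : SSet} (x : Δ[1] ⟶ X) : Prop :=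
  ∃ y : bDelta1 ⟶ X, deltaB ≫ y = x

/-- A Kan complex: every horn (`n ≥ 1`, `0 ≤ k ≤ n`) has a filler. -/
def IsKanComplex (K : SSet) : Prop :=
  ∀ ⦃n : ℕ⦄, 1 ≤ n → ∀ (k : Fin (n + 1)) (f : (Λ[n, k] : SSet) ⟶ K),
    ∃ g : Δ[n] ⟶ K, Λ[n, k].ι ≫ g = f

/-- A Kan fibration: right lifting property with respect to all horn inclusions
(`n ≥ 1`, `0 ≤ k ≤ n`). -/
def IsKanFibration {X Y : SSet} (p : X ⟶ Y) : Prop :=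
  ∀ ⦃n : ℕ⦄, 1 ≤ n → ∀ (k : Fin (n + 1)), HasLiftingProperty (Λ[n, k].ι) p





/-- number of parity changes of a word `w : ℕ → Bool` up to position `n`. -/
def chg (w : ℕ → Bool) : ℕ → ℕ := fun n => match n with
  | 0 => 0
  | (i+1) => chg w i + (if w (i+1) = w i then 0 else 1)

lemma chg_mono (w : ℕ → Bool) : Monotone (chg w) := by
  apply monotone_nat_of_le_succ
  intro n
  simp only [chg]
  omega

/-- extend a word on `Fin (k+1)` to `ℕ`. -/
def wext {k : ℕ} (w : Fin (k+1) → Bool) : ℕ → Bool := fun n => w ⟨min n k, by omega⟩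

lemma wext_val {k : ℕ} (w : Fin (k+1) → Bool) (i : Fin (k+1)) : wext w i = w i := by
  simp only [wext]
  congr 1
  ext
  simp [Nat.min_eq_left (Nat.lt_succ_iff.mp i.isLt)]

/-- canonical reduced map associated to a word (ℕ-valued). -/
def csB {k : ℕ} (w : Fin (k+1) → Bool) (i : Fin (k+1)) : ℕ :=
  chg (wext w) i + (w 0).toNat

lemma csB_mono {k : ℕ} (w : Fin (k+1) → Bool) : Monotone (csB w) := by
  intro i j h
  exact Nat.add_le_add_right (chg_mono (wext w) h) _

lemma csB_parity {k : ℕ} (w : Fin (k+1) → Bool) (i : Fin (k+1)) :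
    (csB w i) % 2 = (w i).toNat := by
  have h0 : wext w 0 = w 0 := wext_val w 0
  have : ∀ n : ℕ, (chg (wext w) n + (wext w 0).toNat) % 2 = (wext w n).toNat := by
    intro n
    induction n with
    | zero => simp [chg]; cases wext w 0 <;> simp
    | succ n ih =>
      simp only [chg]
      by_cases h : wext w (n+1) = wext w n
      · rw [if_pos h, Nat.add_zero, h]; exact ih
      · rw [if_neg h]
        cases hn : wext w n <;> cases hm : wext w (n+1) <;>
          simp [hn, hm] at h ih ⊢ <;> omega
  have := this i
  rw [h0] at this
  rw [csB, this, wext_val]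





lemma csB_succ {k : ℕ} (w : Fin (k+1) → Bool) (i : Fin k) :
    csB w i.succ = csB w i.castSucc + (if w i.succ = w i.castSucc then 0 else 1) := by
  have h1 : wext w (i.val+1) = w i.succ := by
    have := wext_val w i.succ
    simpa using this
  have h2 : wext w i.val = w i.castSucc := by
    have := wext_val w i.castSucc
    simpa using this
  simp only [csB]
  have : (i.succ : ℕ) = i.val + 1 := rfl
  rw [this]
  show chg (wext w) (i.val+1) + _ = _
  rw [chg, h1, h2]
  have : (i.castSucc : ℕ) = i.val := rfl
  rw [this]
  omega

/-- the parity word of a monotone map. -/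
def wrd {k m : ℕ} (α : Fin (k+1) →o Fin (m+1)) : Fin (k+1) → Bool :=
  fun i => decide ((α i : ℕ) % 2 = 1)

lemma csB_le {k m : ℕ} (α : Fin (k+1) →o Fin (m+1)) (i : Fin (k+1)) :
    csB (wrd α) i ≤ (α i : ℕ) := by
  induction i using Fin.induction with
  | zero =>
    show chg _ 0 + _ ≤ _
    rw [chg]
    simp only [wrd, Nat.zero_add]
    rcases Nat.even_or_odd (α 0 : ℕ) with h | h
    · simp [Nat.even_iff.mp h]
    · have h1 := Nat.odd_iff.mp h
      simp [h1]
      omega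
  | succ i ih =>
    rw [csB_succ]
    by_cases h : wrd α i.succ = wrd α i.castSucc
    · rw [if_pos h]
      have := α.monotone (Fin.castSucc_le_succ i)
      omega
    · rw [if_neg h]
      have hne : (α i.succ : ℕ) ≠ (α i.castSucc : ℕ) := by
        intro he
        apply h
        simp [wrd, he]
      have := α.monotone (Fin.castSucc_le_succ i)
      omega

/-- When every nonzero vertex is hit, the map is forced to be the canonical reduced map. -/
lemma csB_forced {k m : ℕ} (α : Fin (k+1) →o Fin (m+1))
    (hsur : ∀ t : Fin (m+1), t ≠ 0 → ∃ i, α i = t) (i : Fin (k+1)) :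
    csB (wrd α) i = (α i : ℕ) := by
  have hstep : ∀ j : Fin k, (α j.succ : ℕ) ≤ (α j.castSucc : ℕ) + 1 := by
    intro j
    by_contra hc
    push_neg at hc
    have htlt : (α j.castSucc : ℕ) + 1 < m + 1 := by
      have := (α j.succ).isLt
      omega
    obtain ⟨i', hi'⟩ := hsur ⟨(α j.castSucc : ℕ) + 1, htlt⟩ (by
      intro he
      have := congrArg Fin.val he
      simp at this)
    have hv : (α i' : ℕ) = (α j.castSucc : ℕ) + 1 := congrArg Fin.val hi'
    rcases le_or_gt (i' : ℕ) (j.castSucc : ℕ) with h | h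
    · have := α.monotone (show i' ≤ j.castSucc from h)
      have : (α i' : ℕ) ≤ (α j.castSucc : ℕ) := this
      omega
    · have : j.succ ≤ i' := h
      have := α.monotone this
      have : (α j.succ : ℕ) ≤ (α i' : ℕ) := this
      omega
  have h0 : (α 0 : ℕ) ≤ 1 := by
    by_contra hc
    push_neg at hc
    have h1lt : (1 : ℕ) < m + 1 := by
      have := (α 0).isLt
      omega
    obtain ⟨i', hi'⟩ := hsur ⟨1, h1lt⟩ (by
      intro he
      have := congrArg Fin.val he
      simp at this)
    have hv : (α i' : ℕ) = 1 := congrArg Fin.val hi'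
    have := α.monotone (show (0 : Fin (k+1)) ≤ i' from Fin.zero_le _)
    have : (α 0 : ℕ) ≤ (α i' : ℕ) := this
    omega
  induction i using Fin.induction with
  | zero =>
    show chg _ 0 + _ = _
    rw [chg]
    simp only [wrd, Nat.zero_add]
    interval_cases h : (α 0 : ℕ) <;> simp
  | succ i ih =>
    rw [csB_succ, ih]
    have hs := hstep i
    have hm := α.monotone (Fin.castSucc_le_succ i)
    have hm : (α i.castSucc : ℕ) ≤ (α i.succ : ℕ) := hm
    by_cases h : wrd α i.succ = wrd α i.castSucc
    · rw [if_pos h]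
      simp only [wrd, decide_eq_decide] at h
      omega
    · rw [if_neg h]
      have : (α i.succ : ℕ) ≠ (α i.castSucc : ℕ) := by
        intro he
        exact h (by simp [wrd, he])
      omega

lemma csB_last {k m : ℕ} (α : Fin (k+1) →o Fin (m+1))
    (hsur : ∀ t : Fin (m+1), t ≠ 0 → ∃ i, α i = t) :
    csB (wrd α) (Fin.last k) = m := by
  rw [csB_forced α hsur]
  rcases Nat.eq_zero_or_pos m with hm | hm
  · subst hm
    omega
  · have hlt : m < m + 1 := by omega
    obtain ⟨i', hi'⟩ := hsur ⟨m, hlt⟩ (by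
      intro he
      have := congrArg Fin.val he
      simp at this
      omega)
    have hv : (α i' : ℕ) = m := congrArg Fin.val hi'
    have h1 := α.monotone (Fin.le_last i')
    have h1 : (α i' : ℕ) ≤ (α (Fin.last k) : ℕ) := h1
    have h2 := (α (Fin.last k)).isLt
    omega



/-- build a morphism of `SimplexCategory` from a bounded monotone `ℕ`-valued function. -/
def homOf {k m : ℕ} (f : Fin (k+1) → ℕ) (hm : Monotone f) (hb : ∀ i, f i ≤ m) :
    (⦋k⦌ : SimplexCategory) ⟶ ⦋m⦌ :=
  SimplexCategory.mkHom ⟨fun i => ⟨f i, Nat.lt_succ_of_le (hb i)⟩, fun _ _ h => hm h⟩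

@[simp] lemma homOf_apply {k m : ℕ} (f : Fin (k+1) → ℕ) (hm : Monotone f) (hb : ∀ i, f i ≤ m)
    (i : Fin (k+1)) : ((homOf f hm hb).toOrderHom i : ℕ) = f i := rfl

lemma parity_toNat (a : ℕ) : a % 2 = (decide (a % 2 = 1)).toNat := by
  rcases Nat.even_or_odd a with h | h
  · simp [Nat.even_iff.mp h]
  · simp [Nat.odd_iff.mp h]

universe u

variable (K : SSet.{u})

/-- A coherent family of simplices up to level `M`. -/
structure Chain (x₁ : K _⦋1⦌) (M : ℕ) : Type u where
  θ : ∀ m, m ≤ M → K _⦋m⦌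
  inv : ∀ {k m₁ m₂ : ℕ} (h₁ : m₁ ≤ M) (h₂ : m₂ ≤ M)
    (α : (⦋k⦌ : SimplexCategory) ⟶ ⦋m₁⦌) (β : (⦋k⦌ : SimplexCategory) ⟶ ⦋m₂⦌),
    (∀ i : Fin (k+1), (α.toOrderHom i : ℕ) % 2 = (β.toOrderHom i : ℕ) % 2) →
    K.map α.op (θ m₁ h₁) = K.map β.op (θ m₂ h₂)
  one : ∀ h : 1 ≤ M, θ 1 h = x₁

variable {K}

/-- levels 0 and 1. -/
noncomputable def baseθ (x₁ : K _⦋1⦌) : ∀ m, m ≤ 1 → K _⦋m⦌ := fun m _ =>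
  match m with
  | 0 => K.map (SimplexCategory.δ (1 : Fin 2)).op x₁
  | 1 => x₁
  | (_+2) => by omega

@[simp] lemma baseθ_zero (x₁ : K _⦋1⦌) (h : 0 ≤ 1) :
    baseθ x₁ 0 h = K.map (SimplexCategory.δ (1 : Fin 2)).op x₁ := rfl

@[simp] lemma baseθ_one (x₁ : K _⦋1⦌) (h : 1 ≤ 1) : baseθ x₁ 1 h = x₁ := rfl

/-- The base chain: levels 0 and 1. -/
noncomputable def baseChain (x₁ : K _⦋1⦌) : Chain K x₁ 1 where
  θ := baseθ x₁
  inv := by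
    intro k m₁ m₂ h₁ h₂ α β hpar
    have key : ∀ (m : ℕ) (hm : m ≤ 1) (γ : (⦋k⦌ : SimplexCategory) ⟶ ⦋m⦌),
        (∀ i : Fin (k+1), (γ.toOrderHom i : ℕ) % 2 = 0) →
          K.map γ.op (baseθ x₁ m hm)
          = K.map (SimplexCategory.const ⦋k⦌ ⦋0⦌ 0).op
              (K.map (SimplexCategory.δ (1 : Fin 2)).op x₁) := by
      intro m hm γ hγ
      match m with
      | 0 =>
        rw [baseθ_zero]
        have hc : γ = SimplexCategory.const ⦋k⦌ ⦋0⦌ 0 := by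
          apply SimplexCategory.Hom.ext
          ext i
          have h1 : ((γ.toOrderHom i : ℕ)) < 1 := (γ.toOrderHom i).isLt
          have h2 : (((SimplexCategory.const ⦋k⦌ ⦋0⦌ 0).toOrderHom i : ℕ)) < 1 :=
            ((SimplexCategory.const ⦋k⦌ ⦋0⦌ 0).toOrderHom i).isLt
          omega
        rw [hc]
      | 1 =>
        rw [baseθ_one]
        have hc : γ = SimplexCategory.const ⦋k⦌ ⦋0⦌ 0 ≫ SimplexCategory.δ (1 : Fin 2) := by
          apply SimplexCategory.Hom.ext
          ext i
          have h2 := hγ i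
          have hlt : ((γ.toOrderHom i : ℕ)) < 2 := (γ.toOrderHom i).isLt
          have hval : (((SimplexCategory.const ⦋k⦌ ⦋0⦌ 0 ≫
              SimplexCategory.δ (1 : Fin 2)).toOrderHom i) : ℕ) = 0 := rfl
          rw [hval]
          omega
        rw [hc, op_comp, K.map_comp]
        rfl
    -- now the four cases
    match m₁, m₂ with
    | 0, 0 =>
      have : α = β := by
        apply SimplexCategory.Hom.ext
        ext i
        have h1 : ((α.toOrderHom i : ℕ)) < 1 := (α.toOrderHom i).isLt
        have h2 : ((β.toOrderHom i : ℕ)) < 1 := (β.toOrderHom i).isLt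
        omega
      rw [this]
    | 1, 1 =>
      have : α = β := by
        apply SimplexCategory.Hom.ext
        ext i
        have h2 := hpar i
        have hlt1 : ((α.toOrderHom i : ℕ)) < 2 := (α.toOrderHom i).isLt
        have hlt2 : ((β.toOrderHom i : ℕ)) < 2 := (β.toOrderHom i).isLt
        omega
      rw [this]
    | 0, 1 =>
      have hα : ∀ i : Fin (k+1), (α.toOrderHom i : ℕ) % 2 = 0 := by
        intro i
        have : ((α.toOrderHom i : ℕ)) < 1 := (α.toOrderHom i).isLt
        omega
      have hβ : ∀ i : Fin (k+1), (β.toOrderHom i : ℕ) % 2 = 0 := by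
        intro i
        rw [← hpar i]
        exact hα i
      rw [key 0 h₁ α hα, key 1 h₂ β hβ]
    | 1, 0 =>
      have hβ : ∀ i : Fin (k+1), (β.toOrderHom i : ℕ) % 2 = 0 := by
        intro i
        have : ((β.toOrderHom i : ℕ)) < 1 := (β.toOrderHom i).isLt
        omega
      have hα : ∀ i : Fin (k+1), (α.toOrderHom i : ℕ) % 2 = 0 := by
        intro i
        rw [hpar i]
        exact hβ i
      rw [key 1 h₁ α hα, key 0 h₂ β hβ]
  one := fun _ => rfl

section Extension

variable {x₁ : K _⦋1⦌} {N : ℕ}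

/-- Reduction data for a simplex of the horn `Λ[N+1, 0]`: a missing nonzero vertex. -/
lemma horn_missing {n : ℕ} {X : SimplexCategoryᵒᵖ} (s : (Λ[n, 0] : SSet).obj X) :
    ∃ t : Fin (n+1), t ≠ 0 ∧ ∀ i, SSet.stdSimplex.asOrderHom s.1 i ≠ t := by
  have h := s.2
  rw [SSet.mem_horn_iff, Set.ne_univ_iff_exists_notMem] at h
  obtain ⟨t, ht⟩ := h
  simp only [Set.mem_union, Set.mem_range, Set.mem_singleton_iff, not_or] at ht
  exact ⟨t, ht.2, fun i hi => ht.1 ⟨i, hi⟩⟩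

/-- the folded-down map: remove the missing vertex `t ≥ 1` and shift everything above down by 2. -/
def foldFun {k n : ℕ} (α : Fin (k+1) →o Fin (n+1+1)) (t : Fin (n+1+1)) : Fin (k+1) → ℕ :=
  fun i => if (α i : ℕ) < (t : ℕ) then (α i : ℕ) else (α i : ℕ) - 2

lemma foldFun_mono {k n : ℕ} (α : Fin (k+1) →o Fin (n+1+1)) (t : Fin (n+1+1))
    (hne : ∀ i, α i ≠ t) : Monotone (foldFun α t) := by
  intro i j hij
  have hm : (α i : ℕ) ≤ (α j : ℕ) := α.monotone hij
  have hi := (hne i)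
  have hj := (hne j)
  have hi' : (α i : ℕ) ≠ (t : ℕ) := fun h => hi (Fin.ext h)
  have hj' : (α j : ℕ) ≠ (t : ℕ) := fun h => hj (Fin.ext h)
  simp only [foldFun]
  split <;> split <;> omega

lemma foldFun_le {k n : ℕ} (α : Fin (k+1) →o Fin (n+1+1)) (t : Fin (n+1+1))
    (ht : t ≠ 0) (hne : ∀ i, α i ≠ t) : ∀ i, foldFun α t i ≤ n := by
  intro i
  have h1 := (α i).isLt
  have h1 : (α i : ℕ) < n + 2 := h1
  have h2 : (α i : ℕ) ≠ (t : ℕ) := fun h => hne i (Fin.ext h)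
  have h3 : (t : ℕ) ≠ 0 := fun h => ht (Fin.ext h)
  have h4 : (t : ℕ) < n + 2 := t.isLt
  simp only [foldFun]
  split <;> omega

lemma foldFun_parity {k n : ℕ} (α : Fin (k+1) →o Fin (n+1+1)) (t : Fin (n+1+1))
    (ht : t ≠ 0) (hne : ∀ i, α i ≠ t) (i : Fin (k+1)) :
    foldFun α t i % 2 = (α i : ℕ) % 2 := by
  have h2 : (α i : ℕ) ≠ (t : ℕ) := fun h => hne i (Fin.ext h)
  have h3 : (t : ℕ) ≠ 0 := fun h => ht (Fin.ext h)
  simp only [foldFun]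
  split
  · rfl
  · omega

/-- the morphism `(Λ[N+1, 0] : SSet) ⟶ K` built from a chain of level `N`. -/
noncomputable def hornF (C : Chain K x₁ N) : (Λ[N+1, 0] : SSet) ⟶ K where
  app X := ↾fun s =>
    let α := SSet.stdSimplex.asOrderHom s.1
    let t := (horn_missing s).choose
    let ht := (horn_missing s).choose_spec
    K.map (homOf (foldFun α t) (foldFun_mono α t ht.2) (foldFun_le α t ht.1 ht.2)).op
      (C.θ N (le_refl N))
  naturality := by
    intro X Y f
    ext s
    set α := SSet.stdSimplex.asOrderHom s.1 with hα
    set t := (horn_missing s).choose with htdef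
    have ht := (horn_missing s).choose_spec
    set s' := (Λ[N+1, 0] : SSet).map f s with hs'
    set α' := SSet.stdSimplex.asOrderHom s'.1 with hα'
    set t' := (horn_missing s').choose with ht'def
    have ht' := (horn_missing s').choose_spec
    have hαα' : ∀ i, α' i = α (f.unop.toOrderHom i) := fun i => rfl
    show K.map (homOf (foldFun α' t') _ _).op (C.θ N (le_refl N))
      = K.map f (K.map (homOf (foldFun α t) _ _).op (C.θ N (le_refl N)))
    rw [← FunctorToTypes.map_comp_apply]
    rw [show (homOf (foldFun α t) (foldFun_mono α t ht.2) (foldFun_le α t ht.1 ht.2)).op ≫ f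
      = (f.unop ≫ homOf (foldFun α t) (foldFun_mono α t ht.2) (foldFun_le α t ht.1 ht.2)).op
      from rfl]
    apply C.inv
    intro i
    show foldFun α' t' i % 2 = foldFun α t (f.unop.toOrderHom i) % 2
    rw [foldFun_parity α' t' ht'.1 ht'.2, foldFun_parity α t ht.1 ht.2]
    rfl

/-- the top simplex from a horn filler. -/
noncomputable def extTop (g : Δ[N+1] ⟶ K) : K _⦋N+1⦌ := SSet.yonedaEquiv (X := K) (n := ⦋N+1⦌) g

lemma map_extTop (g : Δ[N+1] ⟶ K) {k : ℕ} (β : (⦋k⦌ : SimplexCategory) ⟶ ⦋N+1⦌) :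
    K.map β.op (extTop g) = g.app (op ⦋k⦌) ((SSet.stdSimplex.objEquiv).symm β) := by
  have h1 : extTop g = g.app (op ⦋N+1⦌) (ULift.up (𝟙 (⦋N+1⦌ : SimplexCategory))) := rfl
  rw [← SSet.yonedaEquiv_symm_app_objEquiv_symm, extTop, Equiv.symm_apply_apply]

lemma reduceTop (C : Chain K x₁ N) (g : Δ[N+1] ⟶ K)
    (hg : Λ[N+1, 0].ι ≫ g = hornF C) {k : ℕ}
    (β : (⦋k⦌ : SimplexCategory) ⟶ ⦋N+1⦌) (t : Fin (N+2)) (ht0 : t ≠ 0)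
    (htm : ∀ i : Fin (k+1), ((β.toOrderHom i : ℕ)) ≠ (t : ℕ)) :
    ∃ γ : (⦋k⦌ : SimplexCategory) ⟶ ⦋N⦌,
      (∀ i : Fin (k+1), (γ.toOrderHom i : ℕ) % 2 = (β.toOrderHom i : ℕ) % 2) ∧
      K.map β.op (extTop g) = K.map γ.op (C.θ N (le_refl N)) := by
  have prop : Set.range (SSet.stdSimplex.asOrderHom ((SSet.stdSimplex.objEquiv).symm β))
      ∪ {(0 : Fin (N+2))} ≠ Set.univ := by
    intro h
    have hmem : t ∈ Set.range (SSet.stdSimplex.asOrderHom ((SSet.stdSimplex.objEquiv).symm β))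
        ∪ {(0 : Fin (N+2))} := h ▸ Set.mem_univ t
    rcases hmem with ⟨i, hi⟩ | hmem
    · exact htm i (congrArg Fin.val hi)
    · exact ht0 hmem
  set s : (Λ[N+1, 0] : SSet).obj (op ⦋k⦌) := ⟨(SSet.stdSimplex.objEquiv).symm β, prop⟩ with hs
  have ht' := (horn_missing s).choose_spec
  set t' := (horn_missing s).choose with ht'def
  have hαs : SSet.stdSimplex.asOrderHom s.1 = β.toOrderHom := rfl
  refine ⟨homOf (foldFun (SSet.stdSimplex.asOrderHom s.1) t')
      (foldFun_mono _ t' ht'.2) (foldFun_le _ t' ht'.1 ht'.2), ?_, ?_⟩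
  · intro i
    rw [homOf_apply, foldFun_parity _ t' ht'.1 ht'.2]
    rfl
  · rw [map_extTop]
    have h2 : g.app (op ⦋k⦌) ((SSet.stdSimplex.objEquiv).symm β)
        = (Λ[N+1, 0].ι ≫ g).app (op ⦋k⦌) s := rfl
    rw [h2, hg]
    rfl

/-- the extended family of simplices. -/
noncomputable def extθ (C : Chain K x₁ N) (g : Δ[N+1] ⟶ K) :
    ∀ m, m ≤ N + 1 → K _⦋m⦌ := fun m h =>
  if h' : m ≤ N then C.θ m h' else
    cast (by rw [show m = N+1 by omega]) (extTop g)

lemma extθ_le (C : Chain K x₁ N) (g : Δ[N+1] ⟶ K) {m : ℕ} (h : m ≤ N + 1) (h' : m ≤ N) :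
    extθ C g m h = C.θ m h' := dif_pos h'

lemma extθ_top (C : Chain K x₁ N) (g : Δ[N+1] ⟶ K) (h : N + 1 ≤ N + 1) :
    extθ C g (N+1) h = extTop g := by
  rw [extθ, dif_neg (by omega)]
  exact cast_eq _ _

lemma word_eq {k m₁ m₂ : ℕ} (α : (⦋k⦌ : SimplexCategory) ⟶ ⦋m₁⦌) (β : (⦋k⦌ : SimplexCategory) ⟶ ⦋m₂⦌)
    (hpar : ∀ i : Fin (k+1), (α.toOrderHom i : ℕ) % 2 = (β.toOrderHom i : ℕ) % 2) :
    wrd α.toOrderHom = wrd β.toOrderHom := by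
  funext i
  simp only [wrd, decide_eq_decide, hpar i]

lemma helper_mixed (C : Chain K x₁ N) (g : Δ[N+1] ⟶ K)
    (hg : Λ[N+1, 0].ι ≫ g = hornF C) {k m₂ : ℕ} (h₂ : m₂ ≤ N)
    (α : (⦋k⦌ : SimplexCategory) ⟶ ⦋N+1⦌) (β : (⦋k⦌ : SimplexCategory) ⟶ ⦋m₂⦌)
    (hpar : ∀ i : Fin (k+1), (α.toOrderHom i : ℕ) % 2 = (β.toOrderHom i : ℕ) % 2) :
    K.map α.op (extTop g) = K.map β.op (C.θ m₂ h₂) := by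
  by_cases hmiss : ∃ t : Fin (N+2), t ≠ 0 ∧ ∀ i : Fin (k+1), ((α.toOrderHom i : ℕ)) ≠ (t : ℕ)
  · obtain ⟨t, ht0, htm⟩ := hmiss
    obtain ⟨γ, hγpar, hγeq⟩ := reduceTop C g hg α t ht0 htm
    rw [hγeq]
    exact C.inv _ _ _ _ (fun i => (hγpar i).trans (hpar i))
  · push_neg at hmiss
    exfalso
    have hsur : ∀ t : Fin (N+2), t ≠ 0 → ∃ i, α.toOrderHom i = t := by
      intro t ht
      obtain ⟨i, hi⟩ := hmiss t ht
      exact ⟨i, Fin.ext hi⟩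
    have h1 : csB (wrd α.toOrderHom) (Fin.last k) = N + 1 := csB_last _ hsur
    have h2 : csB (wrd β.toOrderHom) (Fin.last k) ≤ (β.toOrderHom (Fin.last k) : ℕ) :=
      csB_le _ _
    have h3 : ((β.toOrderHom (Fin.last k) : ℕ)) < m₂ + 1 := (β.toOrderHom (Fin.last k)).isLt
    rw [word_eq α β hpar] at h1
    omega

lemma helper_toptop (C : Chain K x₁ N) (g : Δ[N+1] ⟶ K)
    (hg : Λ[N+1, 0].ι ≫ g = hornF C) {k : ℕ}
    (α β : (⦋k⦌ : SimplexCategory) ⟶ ⦋N+1⦌)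
    (hpar : ∀ i : Fin (k+1), (α.toOrderHom i : ℕ) % 2 = (β.toOrderHom i : ℕ) % 2) :
    K.map α.op (extTop g) = K.map β.op (extTop g) := by
  by_cases hmiss : ∃ t : Fin (N+2), t ≠ 0 ∧ ∀ i : Fin (k+1), ((α.toOrderHom i : ℕ)) ≠ (t : ℕ)
  · obtain ⟨t, ht0, htm⟩ := hmiss
    obtain ⟨γ, hγpar, hγeq⟩ := reduceTop C g hg α t ht0 htm
    rw [hγeq]
    exact (helper_mixed C g hg (le_refl N) β γ
      (fun i => ((hpar i).symm.trans (hγpar i).symm))).symm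
  · by_cases hmiss' : ∃ t : Fin (N+2), t ≠ 0 ∧ ∀ i : Fin (k+1), ((β.toOrderHom i : ℕ)) ≠ (t : ℕ)
    · obtain ⟨t, ht0, htm⟩ := hmiss'
      obtain ⟨γ, hγpar, hγeq⟩ := reduceTop C g hg β t ht0 htm
      rw [hγeq]
      push_neg at hmiss
      exfalso
      have hsur : ∀ t : Fin (N+2), t ≠ 0 → ∃ i, α.toOrderHom i = t := by
        intro t ht
        obtain ⟨i, hi⟩ := hmiss t ht
        exact ⟨i, Fin.ext hi⟩
      have h1 : csB (wrd α.toOrderHom) (Fin.last k) = N + 1 := csB_last _ hsur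
      have h2 : csB (wrd γ.toOrderHom) (Fin.last k) ≤ (γ.toOrderHom (Fin.last k) : ℕ) :=
        csB_le _ _
      have h3 : ((γ.toOrderHom (Fin.last k) : ℕ)) < N + 1 := (γ.toOrderHom (Fin.last k)).isLt
      have hw : wrd α.toOrderHom = wrd γ.toOrderHom :=
        word_eq α γ (fun i => (hpar i).trans (hγpar i).symm)
      rw [hw] at h1
      omega
    · push_neg at hmiss hmiss'
      have hα : ∀ i, (α.toOrderHom i : ℕ) = csB (wrd α.toOrderHom) i := by
        intro i
        refine (csB_forced _ (fun t ht => ?_) i).symm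
        obtain ⟨j, hj⟩ := hmiss t ht
        exact ⟨j, Fin.ext hj⟩
      have hβ : ∀ i, (β.toOrderHom i : ℕ) = csB (wrd β.toOrderHom) i := by
        intro i
        refine (csB_forced _ (fun t ht => ?_) i).symm
        obtain ⟨j, hj⟩ := hmiss' t ht
        exact ⟨j, Fin.ext hj⟩
      have : α = β := by
        apply SimplexCategory.Hom.ext
        ext i
        rw [hα i, hβ i, word_eq α β hpar]
      rw [this]

/-- Extend a chain one level up using a horn filler. -/
noncomputable def extendChain (C : Chain K x₁ N) (hN : 1 ≤ N) (g : Δ[N+1] ⟶ K)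
    (hg : Λ[N+1, 0].ι ≫ g = hornF C) : Chain K x₁ (N+1) where
  θ := extθ C g
  inv := by
    intro k m₁ m₂ h₁ h₂ α β hpar
    by_cases c₁ : m₁ ≤ N <;> by_cases c₂ : m₂ ≤ N
    · rw [extθ_le C g h₁ c₁, extθ_le C g h₂ c₂]
      exact C.inv _ _ _ _ hpar
    · have : m₂ = N + 1 := by omega
      subst this
      rw [extθ_le C g h₁ c₁, extθ_top C g h₂]
      exact (helper_mixed C g hg c₁ β α (fun i => (hpar i).symm)).symm
    · have : m₁ = N + 1 := by omega
      subst this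
      rw [extθ_le C g h₂ c₂, extθ_top C g h₁]
      exact helper_mixed C g hg c₂ α β hpar
    · have e1 : m₁ = N + 1 := by omega
      have e2 : m₂ = N + 1 := by omega
      subst e1; subst e2
      rw [extθ_top C g h₁]
      try rw [extθ_top C g h₂]
      exact helper_toptop C g hg α β hpar
  one := by
    intro h
    rw [extθ_le C g h (by omega)]
    exact C.one _

end Extension

section Global

variable {x₁ : K _⦋1⦌}

/-- chains at every level. -/
noncomputable def chains (x₁ : K _⦋1⦌)
    (hfill : ∀ (n : ℕ), 1 ≤ n → ∀ F : (Λ[n, 0] : SSet) ⟶ K,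
      ∃ g : Δ[n] ⟶ K, Λ[n, 0].ι ≫ g = F) : ∀ M : ℕ, Chain K x₁ (M+1) := fun M => match M with
  | 0 => baseChain x₁
  | (M+1) => extendChain (chains x₁ hfill M) (by omega)
      (hfill (M+2) (by omega) (hornF (chains x₁ hfill M))).choose
      (hfill (M+2) (by omega) (hornF (chains x₁ hfill M))).choose_spec

variable (hfill : ∀ (n : ℕ), 1 ≤ n → ∀ F : (Λ[n, 0] : SSet) ⟶ K,
      ∃ g : Δ[n] ⟶ K, Λ[n, 0].ι ≫ g = F)

/-- the global family of simplices. -/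
noncomputable def theta (x₁ : K _⦋1⦌) (m : ℕ) : K _⦋m⦌ :=
  (chains x₁ hfill m).θ m (Nat.le_succ m)

lemma chains_agree : ∀ (M m : ℕ) (h : m ≤ M+1),
    (chains x₁ hfill M).θ m h = theta hfill x₁ m := by
  intro M
  induction M with
  | zero =>
    intro m h
    match m, h with
    | 0, h => rfl
    | 1, h => rfl
  | succ M ih =>
    intro m h
    by_cases h' : m ≤ M + 1
    · have e1 : (chains x₁ hfill (M+1)).θ m h
          = (chains x₁ hfill M).θ m h' := by
        show extθ _ _ m h = _
        rw [extθ_le]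
      rw [e1, ih m h']
    · have e2 : m = M + 2 := by omega
      subst e2
      show (chains x₁ hfill (M+1)).θ (M+2) h
        = extθ (chains x₁ hfill (M+1))
            ((hfill (M+3) (by omega) (hornF (chains x₁ hfill (M+1)))).choose)
            (M+2) (Nat.le_succ _)
      rw [extθ_le _ _ _ (le_refl (M+2))]

lemma global_inv {k m₁ m₂ : ℕ} (α : (⦋k⦌ : SimplexCategory) ⟶ ⦋m₁⦌)
    (β : (⦋k⦌ : SimplexCategory) ⟶ ⦋m₂⦌)
    (hpar : ∀ i : Fin (k+1), (α.toOrderHom i : ℕ) % 2 = (β.toOrderHom i : ℕ) % 2) :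
    K.map α.op (theta hfill x₁ m₁) = K.map β.op (theta hfill x₁ m₂) := by
  have h₁ : m₁ ≤ (max m₁ m₂) + 1 := by omega
  have h₂ : m₂ ≤ (max m₁ m₂) + 1 := by omega
  rw [← chains_agree hfill (max m₁ m₂) m₁ h₁, ← chains_agree hfill (max m₁ m₂) m₂ h₂]
  exact (chains x₁ hfill (max m₁ m₂)).inv h₁ h₂ α β hpar

lemma theta_one : theta hfill x₁ 1 = x₁ := (chains x₁ hfill 1).one _

end Global

/-- boolean coding of the two objects. -/
def TwoObj.w : TwoObj → Bool := fun o => match o with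
  | .zero => false
  | .one => true

section Final

variable (K₀ : SSet.{0})

/-- the word of a simplex of `bDelta1`. -/
def wB {X : SimplexCategoryᵒᵖ} (F : bDelta1.obj X) : Fin (X.unop.len + 1) → Bool :=
  fun i => TwoObj.w (F.obj i)

variable (x₁ : K₀ _⦋1⦌)
variable (hfill : ∀ (n : ℕ), 1 ≤ n → ∀ F : (Λ[n, 0] : SSet) ⟶ K₀,
      ∃ g : Δ[n] ⟶ K₀, Λ[n, 0].ι ≫ g = F)

/-- the extension `bΔ[1] ⟶ K`. -/
noncomputable def yb : bDelta1 ⟶ K₀ where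
  app X := ↾fun F => K₀.map (homOf (csB (wB F)) (csB_mono _)
      (fun i => csB_mono _ (Fin.le_last i))).op
      (theta hfill x₁ (csB (wB F) (Fin.last _)))
  naturality := by
    intro X Y f
    ext F
    show K₀.map (homOf (csB (wB (bDelta1.map f F))) _ _).op
        (theta hfill x₁ (csB (wB (bDelta1.map f F)) (Fin.last _)))
      = K₀.map f (K₀.map (homOf (csB (wB F)) _ _).op
        (theta hfill x₁ (csB (wB F) (Fin.last _))))
    rw [← FunctorToTypes.map_comp_apply]
    rw [show (homOf (csB (wB F)) (csB_mono _) (fun i => csB_mono _ (Fin.le_last i))).op ≫ f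
      = (f.unop ≫ homOf (csB (wB F)) (csB_mono _) (fun i => csB_mono _ (Fin.le_last i))).op
      from rfl]
    apply global_inv
    intro i
    show csB (wB (bDelta1.map f F)) i % 2 = csB (wB F) (f.unop.toOrderHom i) % 2
    rw [csB_parity, csB_parity]
    rfl

theorem main_ext : deltaB ≫ yb K₀ x₁ hfill = (SSet.yonedaEquiv (X := K₀) (n := ⦋1⦌)).symm x₁ := by
  apply (SSet.yonedaEquiv (X := K₀) (n := ⦋1⦌)).injective
  rw [Equiv.apply_symm_apply]
  have h1 : SSet.yonedaEquiv (X := K₀) (n := ⦋1⦌) (deltaB ≫ yb K₀ x₁ hfill)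
      = (yb K₀ x₁ hfill).app (op ⦋1⦌) (SSet.yonedaEquiv (X := bDelta1) (n := ⦋1⦌) deltaB) := rfl
  rw [h1]
  have h2 : SSet.yonedaEquiv (X := bDelta1) (n := ⦋1⦌) deltaB
      = CategoryTheory.ComposableArrows.mk₁ (homOfLE trivial : TwoObj.zero ⟶ TwoObj.one) :=
    (SSet.yonedaEquiv (X := bDelta1) (n := ⦋1⦌)).apply_symm_apply _
  rw [h2]
  set F := CategoryTheory.ComposableArrows.mk₁ (homOfLE trivial : TwoObj.zero ⟶ TwoObj.one)
  show K₀.map (homOf (csB (wB (X := op ⦋1⦌) F)) _ _).op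
      (theta hfill x₁ (csB (wB (X := op ⦋1⦌) F) (Fin.last _))) = x₁
  have hnb : csB (wB (X := op ⦋1⦌) F) (Fin.last 1) = 1 := rfl
  show K₀.map (homOf (csB (wB (X := op ⦋1⦌) F)) _ _ : (⦋1⦌ : SimplexCategory) ⟶ ⦋1⦌).op
      (theta hfill x₁ 1) = x₁
  have hid : (homOf (csB (wB (X := op ⦋1⦌) F)) (csB_mono _) (fun i => csB_mono _ (Fin.le_last i))
      : (⦋1⦌ : SimplexCategory) ⟶ ⦋1⦌) = 𝟙 (⦋1⦌ : SimplexCategory) := by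
    apply SimplexCategory.Hom.ext
    ext i
    fin_cases i <;> rfl
  rw [hid, op_id, K₀.map_id, theta_one]
  rfl

end Final


/-- Every edge of a Kan complex is invertible. -/
theorem every_edge_of_kan_complex_is_invertible (K : SSet) (hK : IsKanComplex K)
    (x : Δ[1] ⟶ K) : ∃ y : bDelta1 ⟶ K, deltaB ≫ y = x := by
  have hfill : ∀ (n : ℕ), 1 ≤ n → ∀ F : (Λ[n, 0] : SSet) ⟶ K,
      ∃ g : Δ[n] ⟶ K, Λ[n, 0].ι ≫ g = F := fun n hn F => hK hn 0 F
  refine ⟨yb K (SSet.yonedaEquiv (X := K) (n := ⦋1⦌) x) hfill, ?_⟩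
  rw [main_ext, Equiv.symm_apply_apply]

end IndexedPaper
end

section
/- Let C be a category with all small coproducts, let S be a family of morphisms of C, and let F be the class of morphisms of C with the right lifting property with respect to every member of S (the 'fibrations'). Call a morphism of C a trivial cofibration if it has the left lifting property with respect to every member of F. Let J be a small category, and call a morphism φ of the functor category C^J an injective fibration if it has the right lifting property with respect to every morphism of C^J all of whose components are trivial cofibrations. Then every injective fibration φ : X → Y of C^J is a projective fibration, i.e., for every object j of J the component φ_j : X(j) → Y(j) belongs to F. -/
open CategoryTheory CategoryTheory.Limits

namespace IndexedPaper

universe w t v u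

variable {C : Type u} [Category.{v} C]

/-- The fibrations determined by a family `S` of morphisms: the morphisms with the
right lifting property with respect to every member of `S`. -/
def IsFibS {ι : Type t} {A B : ι → C} (S : ∀ i, A i ⟶ B i) {X Y : C} (p : X ⟶ Y) : Prop :=
  ∀ i, HasLiftingProperty (S i) p

/-- The trivial cofibrations: morphisms with the left lifting property with respect to
every fibration. -/
def IsTrivCofS {ι : Type t} {A B : ι → C} (S : ∀ i, A i ⟶ B i) {X Y : C} (g : X ⟶ Y) : Prop :=
  ∀ ⦃W Z : C⦄ (p : W ⟶ Z), IsFibS S p → HasLiftingProperty g p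

/-!
An injective fibration lifts against the free diagram `(evaluationLeftAdjoint C j).map (S i)`,
because its component at `k` is a coproduct of copies of `S i` indexed by `j ⟶ k`, and trivial
cofibrations are closed under coproducts. Transposing along
`evaluationLeftAdjoint C j ⊣ (evaluation J C).obj j` turns this into a lift of `S i` against
`φ.app j`.
-/

lemma evaluationLeftAdjoint_map_app_eq_sigmaMap {J : Type*} [Category J] {D : Type*}
    [Category D] [∀ a b : J, HasCoproductsOfShape (a ⟶ b) D] (j k : J) {a b : D}
    (g : a ⟶ b) :
    ((evaluationLeftAdjoint D j).map g).app k = Limits.Sigma.map (fun _ : j ⟶ k => g) := by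
  refine Sigma.hom_ext _ _ fun _ => ?_
  simp [evaluationLeftAdjoint]

section TrivialCofibrations

variable {ι : Type t} {A B : ι → C} (S : ∀ i, A i ⟶ B i)

lemma isTrivCofS_apply (i : ι) : IsTrivCofS S (S i) :=
  fun _ _ _ hp => hp i

lemma IsTrivCofS.sigmaMap {σ : Type*} {P Q : σ → C} [HasCoproduct P] [HasCoproduct Q]
    {g : ∀ s, P s ⟶ Q s} (hg : ∀ s, IsTrivCofS S (g s)) : IsTrivCofS S (Limits.Sigma.map g) :=
  fun _ _ p hp =>
    have := fun s => hg s p hp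
    inferInstance

lemma IsTrivCofS.evaluationLeftAdjoint_map_app {J : Type*} [Category J]
    [∀ a b : J, HasCoproductsOfShape (a ⟶ b) C] {a b : C} {g : a ⟶ b}
    (hg : IsTrivCofS S g) (j k : J) : IsTrivCofS S (((evaluationLeftAdjoint C j).map g).app k) := by
  rw [evaluationLeftAdjoint_map_app_eq_sigmaMap]
  exact IsTrivCofS.sigmaMap S fun _ => hg

end TrivialCofibrations

/-- In a category with all small coproducts, every injective fibration
of a functor category is a projective fibration. -/
theorem injective_fibration_is_projective_fibration [HasCoproducts.{w} C]
    {ι : Type t} {A B : ι → C} (S : ∀ i, A i ⟶ B i)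
    {J : Type w} [SmallCategory J] {X Y : J ⥤ C} (φ : X ⟶ Y)
    (hφ : ∀ ⦃F G : J ⥤ C⦄ (i : F ⟶ G), (∀ j : J, IsTrivCofS S (i.app j)) →
      HasLiftingProperty i φ)
    (j : J) : IsFibS S (φ.app j) := by
  intro i
  exact ((evaluationAdjunctionRight C j).hasLiftingProperty_iff (S i) φ).mp
    (hφ _ ((isTrivCofS_apply S i).evaluationLeftAdjoint_map_app S j))

end IndexedPaper
end
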